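/- arXiv:2012.12966 — 3 statements merged into one kernel-verified Lean document; each statement's English description precedes it below -/
import Mathlib

section
/- In any dimension d ≥ 1, for all a, c, t > 0 and all x ∈ ℝ^d, the spherical integral ∫_{|z|=1} exp(-|x + ctz|²/(at)) dS(z) is bounded by C(d)(1+t)^{-(d-1)/2} exp(-(|x| - ct)²/(4at)), where C(d) depends only on d (and a, c). -/
/-!
Write `x = ‖x‖ e` with `‖e‖ = 1`. For `‖z‖ = 1`,
`‖x + ct z‖² = (‖x‖ - ct)² + ct ‖x‖ ‖z + e‖²`, so the integral is `exp (-(‖x‖ - ct)² / (at))`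
times the Laplace-type integral `∫ exp (-λ ‖z + e‖²) dS(z)` with `λ = c ‖x‖ / a`. The latter is
`O((1 + λ)^{-(d-1)/2})`: near `-e` the sphere is the graph of a Lipschitz function over a ball in
`e^⊥`, on which the integrand is at most the Gaussian `exp (-λ |u|²)`, and the rest of the sphere
contributes `O(e^{-λ})`.

It remains to trade a quarter of the Gaussian factor for `(1 + t)^{-(d-1)/2}`. If `‖x‖ ≥ ct/2`
then `λ ≥ c²t/(2a)`; otherwise `(‖x‖ - ct)² ≥ (ct/2)²`, and the remaining three quarters of the
Gaussian factor are at most `exp (-3c²t/(16a))`, which beats every power of `1 + t`.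
-/
open MeasureTheory Real Module Set
open scoped ENNReal NNReal RealInnerProductSpace Topology

theorem exists_exp_neg_mul_le_mul_one_add_rpow_neg {s γ : ℝ} (hs : 0 ≤ s) (hγ : 0 < γ) :
    ∃ C > 0, ∀ x : ℝ, 0 ≤ x → exp (-(γ * x)) ≤ C * (1 + x) ^ (-s) := by
  set K := max 1 ((s + 1) / γ)
  refine ⟨K ^ s, by positivity, fun x hx => ?_⟩
  set y := γ * x / (s + 1)
  -- `1 + y ≤ exp y` raised to the power `s`, after rescaling `1 + x` to `1 + y`
  have hxy : 1 + x ≤ K * (1 + y) := by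
    have hK : s + 1 ≤ K * γ := (div_le_iff₀ hγ).mp (le_max_right _ _)
    have : x ≤ K * y := by
      rw [mul_div_assoc', le_div_iff₀ (by positivity)]
      nlinarith
    nlinarith [le_max_left 1 ((s + 1) / γ)]
  have hpow : (1 + x) ^ s ≤ K ^ s * exp (γ * x) :=
    calc (1 + x) ^ s ≤ (K * (1 + y)) ^ s := by gcongr
      _ = K ^ s * (1 + y) ^ s := mul_rpow (by positivity) (by positivity)
      _ ≤ K ^ s * exp y ^ s := by gcongr; linarith [add_one_le_exp y]
      _ = K ^ s * exp (y * s) := by rw [exp_mul]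
      _ ≤ K ^ s * exp (γ * x) := by
          refine mul_le_mul_of_nonneg_left (exp_le_exp.mpr ?_) (by positivity)
          rw [div_mul_eq_mul_div, div_le_iff₀ (by positivity)]
          nlinarith [mul_nonneg hγ.le hx]
  rw [exp_neg, rpow_neg (by positivity), ← div_eq_mul_inv, le_div_iff₀ (by positivity),
    mul_comm, ← div_eq_mul_inv, div_le_iff₀ (exp_pos _)]
  exact hpow

theorem exists_exp_neg_mul_sq_mul_one_add_rpow_neg_le {s a c : ℝ} (hs : 0 ≤ s) (ha : 0 < a)
    (hc : 0 < c) :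
    ∃ C > 0, ∀ t > 0, ∀ r ≥ 0,
      exp (-(3 * (r - c * t) ^ 2 / (4 * a * t))) * (1 + c * r / a) ^ (-s) ≤ C * (1 + t) ^ (-s) := by
  obtain ⟨C₁, hC₁, hdecay⟩ :=
    exists_exp_neg_mul_le_mul_one_add_rpow_neg hs (γ := 3 * c ^ 2 / (16 * a)) (by positivity)
  set m := min 1 (c ^ 2 / (2 * a))
  have hm : 0 < m := lt_min one_pos (by positivity)
  refine ⟨C₁ + m ^ (-s), by positivity, fun t ht r hr => ?_⟩
  rcases le_or_gt (c * t / 2) r with hfar | hnear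
  · -- the polynomial factor decays: `1 + c r / a ≥ m (1 + t)`
    have hexp_le_one : exp (-(3 * (r - c * t) ^ 2 / (4 * a * t))) ≤ 1 := by
      rw [exp_le_one_iff, neg_nonpos]; positivity
    have hbase : m * (1 + t) ≤ 1 + c * r / a := by
      have h1 : m ≤ 1 := min_le_left _ _
      have h2 : m * t ≤ c * r / a := by
        calc m * t ≤ c ^ 2 / (2 * a) * t := by gcongr; exact min_le_right _ _
          _ = c * (c * t / 2) / a := by ring
          _ ≤ c * r / a := by gcongr
      nlinarith
    have hpoly : (1 + c * r / a) ^ (-s) ≤ m ^ (-s) * (1 + t) ^ (-s) := by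
      rw [← mul_rpow hm.le (by positivity)]
      exact rpow_le_rpow_of_nonpos (by positivity) hbase (neg_nonpos.mpr hs)
    calc exp (-(3 * (r - c * t) ^ 2 / (4 * a * t))) * (1 + c * r / a) ^ (-s)
        ≤ 1 * (m ^ (-s) * (1 + t) ^ (-s)) := by gcongr
      _ ≤ (C₁ + m ^ (-s)) * (1 + t) ^ (-s) := by
          rw [one_mul, add_mul]; exact le_add_of_nonneg_left (by positivity)
  · -- the Gaussian factor decays: `|r - c t| > c t / 2`
    have hq : (c * t / 2) ^ 2 ≤ (r - c * t) ^ 2 := by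
      rw [show (r - c * t) ^ 2 = (c * t - r) ^ 2 by ring]; gcongr; linarith
    have hgauss : exp (-(3 * (r - c * t) ^ 2 / (4 * a * t))) ≤ C₁ * (1 + t) ^ (-s) := by
      refine le_trans (exp_le_exp.mpr ?_) (hdecay t ht.le)
      rw [neg_le_neg_iff, le_div_iff₀ (by positivity),
        show 3 * c ^ 2 / (16 * a) * t * (4 * a * t) = 3 * (c * t / 2) ^ 2 by field_simp; ring]
      linarith
    have hpoly : (1 + c * r / a) ^ (-s) ≤ 1 :=
      rpow_le_one_of_one_le_of_nonpos (le_add_of_nonneg_right (by positivity))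
        (neg_nonpos.mpr hs)
    calc exp (-(3 * (r - c * t) ^ 2 / (4 * a * t))) * (1 + c * r / a) ^ (-s)
        ≤ C₁ * (1 + t) ^ (-s) * 1 := by gcongr
      _ ≤ (C₁ + m ^ (-s)) * (1 + t) ^ (-s) := by
          rw [mul_one, add_mul]; exact le_add_of_nonneg_right (by positivity)

theorem exists_exp_mul_one_add_rpow_neg_le {s a c : ℝ} (hs : 0 ≤ s) (ha : 0 < a) (hc : 0 < c) :
    ∃ C > 0, ∀ t > 0, ∀ r ≥ 0, exp (-(r - c * t) ^ 2 / (a * t)) * (1 + c * r / a) ^ (-s) ≤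
      C * (1 + t) ^ (-s) * exp (-(r - c * t) ^ 2 / (4 * a * t)) := by
  obtain ⟨C, hC, hbound⟩ := exists_exp_neg_mul_sq_mul_one_add_rpow_neg_le hs ha hc
  refine ⟨C, hC, fun t ht r hr => ?_⟩
  have hsplit : exp (-(r - c * t) ^ 2 / (a * t)) =
      exp (-(3 * (r - c * t) ^ 2 / (4 * a * t))) * exp (-(r - c * t) ^ 2 / (4 * a * t)) := by
    rw [← exp_add]; congr 1; field_simp; ring
  rw [hsplit, mul_right_comm]
  exact mul_le_mul_of_nonneg_right (hbound t ht r hr) (exp_pos _).le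

section Gaussian

variable {F : Type*} [NormedAddCommGroup F] [InnerProductSpace ℝ F] [FiniteDimensional ℝ F]
  [MeasurableSpace F] [BorelSpace F]

theorem setIntegral_exp_neg_mul_sq_norm_le {s : Set F} (hs : MeasurableSet s)
    (hs₁ : s ⊆ Metric.closedBall 0 1) {b : ℝ} (hb : 0 ≤ b) :
    ∫ u in s, exp (-b * ‖u‖ ^ 2) ≤
      exp 1 * π ^ (finrank ℝ F / 2 : ℝ) * (1 + b) ^ (-(finrank ℝ F / 2 : ℝ)) := by
  set g : F → ℝ := fun u => exp 1 * exp (-(1 + b) * ‖u‖ ^ 2)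
  have hg : Integrable g := by
    refine Integrable.const_mul (Integrable.of_integral_ne_zero ?_) _
    rw [GaussianFourier.integral_rexp_neg_mul_sq_norm (by positivity)]
    positivity
  -- on the unit ball the factor `exp ‖u‖²` is at most `e`
  have hle : ∀ u ∈ s, exp (-b * ‖u‖ ^ 2) ≤ g u := by
    intro u hu
    have : ‖u‖ ≤ 1 := by simpa using hs₁ hu
    simp only [g, ← exp_add, exp_le_exp]
    nlinarith [norm_nonneg u]
  calc ∫ u in s, exp (-b * ‖u‖ ^ 2)
      ≤ ∫ u in s, g u := by
        refine setIntegral_mono_on ?_ hg.integrableOn hs hle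
        refine hg.integrableOn.mono' (by fun_prop) (ae_restrict_of_forall_mem hs fun u hu => ?_)
        rw [norm_of_nonneg (exp_pos _).le]
        exact hle u hu
    _ ≤ ∫ u, g u := setIntegral_le_integral hg (ae_of_all _ fun u => by positivity)
    _ = exp 1 * π ^ (finrank ℝ F / 2 : ℝ) * (1 + b) ^ (-(finrank ℝ F / 2 : ℝ)) := by
        rw [integral_const_mul, GaussianFourier.integral_rexp_neg_mul_sq_norm (by positivity),
          div_rpow pi_pos.le (by positivity), rpow_neg (by positivity), mul_assoc, div_eq_mul_inv]

end Gaussian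

noncomputable def hausdorffScalarFactor (n : ℕ) : ℝ≥0 :=
  Measure.addHaarScalarFactor (volume : Measure (EuclideanSpace ℝ (Fin n))) μH[n]

theorem hausdorffScalarFactor_pos (n : ℕ) : 0 < hausdorffScalarFactor n :=
  pos_iff_ne_zero.mpr (Measure.addHaarScalarFactor_volume_hausdorffMeasure_ne_zero n)

theorem InnerProductSpace.hausdorffMeasure_finrank_eq_smul_volume (V : Type*)
    [NormedAddCommGroup V] [InnerProductSpace ℝ V] [FiniteDimensional ℝ V] [MeasurableSpace V]
    [BorelSpace V] :
    (μH[finrank ℝ V] : Measure V) = (hausdorffScalarFactor (finrank ℝ V))⁻¹ • volume := by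
  rw [← InnerProductSpace.euclideanHausdorffMeasure_eq_volume (V := V),
    Measure.euclideanHausdorffMeasure_def, smul_smul, ← hausdorffScalarFactor,
    inv_mul_cancel₀ (hausdorffScalarFactor_pos _).ne', one_smul]

section Lipschitz

variable {X Y : Type*} [EMetricSpace X] [MeasurableSpace X] [BorelSpace X]
  [EMetricSpace Y] [MeasurableSpace Y] [BorelSpace Y]
  {K : ℝ≥0} {f : X → Y} {s : Set X} {t : Set Y} {d : ℝ}

theorem LipschitzOnWith.restrict_hausdorffMeasure_le_smul_map (hf : LipschitzOnWith K f s)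
    (hfm : Measurable f) (ht : t ⊆ f '' s) (hd : 0 ≤ d) :
    μH[d].restrict t ≤ ((K : ℝ≥0∞) ^ d) • (μH[d].restrict s).map f := by
  refine Measure.le_iff.mpr fun A hA => ?_
  rw [Measure.restrict_apply hA, Measure.smul_apply, Measure.map_apply hfm hA,
    Measure.restrict_apply (hfm hA), smul_eq_mul]
  calc μH[d] (A ∩ t) ≤ μH[d] (f '' (f ⁻¹' A ∩ s)) := by
        refine measure_mono fun y ⟨hyA, hyt⟩ => ?_
        obtain ⟨x, hx, rfl⟩ := ht hyt
        exact ⟨x, ⟨hyA, hx⟩, rfl⟩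
    _ ≤ (K : ℝ≥0∞) ^ d * μH[d] (f ⁻¹' A ∩ s) :=
        (hf.mono inter_subset_right).hausdorffMeasure_image_le hd

theorem LipschitzOnWith.setIntegral_hausdorffMeasure_le (hf : LipschitzOnWith K f s)
    (hfm : Measurable f) (ht : t ⊆ f '' s) (hd : 0 ≤ d) {g : Y → ℝ} (hg₀ : 0 ≤ g)
    (hgm : Measurable g) (hgf : IntegrableOn (g ∘ f) s μH[d]) :
    ∫ y in t, g y ∂μH[d] ≤ (K : ℝ) ^ d * ∫ x in s, g (f x) ∂μH[d] := by
  have hmap : Integrable g ((μH[d].restrict s).map f) :=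
    (integrable_map_measure hgm.aestronglyMeasurable hfm.aemeasurable).mpr hgf
  calc ∫ y in t, g y ∂μH[d]
      ≤ ∫ y, g y ∂(((K : ℝ≥0∞) ^ d) • (μH[d].restrict s).map f) :=
        integral_mono_measure (hf.restrict_hausdorffMeasure_le_smul_map hfm ht hd)
          (ae_of_all _ hg₀) (hmap.smul_measure (by finiteness))
    _ = (K : ℝ) ^ d * ∫ x in s, g (f x) ∂μH[d] := by
        rw [integral_smul_measure, integral_map hfm.aemeasurable hgm.aestronglyMeasurable,
          ← ENNReal.toReal_rpow, ENNReal.coe_toReal, smul_eq_mul]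

end Lipschitz

theorem abs_sqrt_sub_sqrt_mul_le {a b h : ℝ} (ha : h ^ 2 ≤ a) (hb : h ^ 2 ≤ b) :
    |√a - √b| * (2 * h) ≤ |a - b| := by
  have ha₀ : 0 ≤ a := (sq_nonneg h).trans ha
  have hb₀ : 0 ≤ b := (sq_nonneg h).trans hb
  have ha' : h ≤ √a := Real.le_sqrt_of_sq_le ha
  have hb' : h ≤ √b := Real.le_sqrt_of_sq_le hb
  calc |√a - √b| * (2 * h) ≤ |√a - √b| * (√a + √b) := by gcongr; linarith
    _ = |a - b| := by
        rw [← abs_of_nonneg (by positivity : 0 ≤ √a + √b), ← abs_mul]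
        congr 1
        linear_combination sq_sqrt ha₀ - sq_sqrt hb₀

section SphereChart

variable {E : Type*} [NormedAddCommGroup E] [InnerProductSpace ℝ E] {p : E} {h : ℝ≥0}

/-- The inverse of the orthogonal projection of the upper hemisphere around `p` onto `pᗮ`. -/
noncomputable def sphereChart (p u : E) : E := u + √(1 - ‖u‖ ^ 2) • p

def sphereCap (p : E) (h : ℝ) : Set E := Metric.sphere 0 1 ∩ {z | h ≤ ⟪p, z⟫}

def sphereChartDomain (p : E) (h : ℝ) : Set (ℝ ∙ p)ᗮ := {u | ‖u‖ ^ 2 ≤ 1 - h ^ 2}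

theorem sphereChartDomain_subset_closedBall {h : ℝ} :
    sphereChartDomain p h ⊆ Metric.closedBall 0 1 := fun u hu => by
  have hu : ‖u‖ ^ 2 ≤ 1 - h ^ 2 := hu
  rw [mem_closedBall_zero_iff]
  nlinarith [norm_nonneg u]

theorem measurableSet_sphereChartDomain [MeasurableSpace E] [BorelSpace E] {h : ℝ} :
    MeasurableSet (sphereChartDomain p h) :=
  measurableSet_le (by fun_prop) (by fun_prop)

@[fun_prop]
theorem continuous_sphereChart (p : E) : Continuous (sphereChart p) := by
  unfold sphereChart; fun_prop

theorem lipschitzOnWith_sphereChart (hp : ‖p‖ = 1) (hh : 0 < h) :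
    LipschitzOnWith (1 + h⁻¹) (sphereChart p) {u | ‖u‖ ^ 2 ≤ 1 - h ^ 2} := by
  refine LipschitzOnWith.of_dist_le_mul fun u (hu : ‖u‖ ^ 2 ≤ _) v (hv : ‖v‖ ^ 2 ≤ _) => ?_
  have hu₁ : ‖u‖ ≤ 1 := by nlinarith [norm_nonneg u]
  have hv₁ : ‖v‖ ≤ 1 := by nlinarith [norm_nonneg v]
  have hsqrt : |√(1 - ‖u‖ ^ 2) - √(1 - ‖v‖ ^ 2)| ≤ (h : ℝ)⁻¹ * ‖u - v‖ := by
    have key := abs_sqrt_sub_sqrt_mul_le (a := 1 - ‖u‖ ^ 2) (b := 1 - ‖v‖ ^ 2) (h := h)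
      (by linarith) (by linarith)
    have hnorm : |(1 - ‖u‖ ^ 2) - (1 - ‖v‖ ^ 2)| ≤ 2 * ‖u - v‖ := by
      rw [show (1 - ‖u‖ ^ 2) - (1 - ‖v‖ ^ 2) = (‖v‖ - ‖u‖) * (‖v‖ + ‖u‖) by ring, abs_mul,
        abs_of_nonneg (by positivity : 0 ≤ ‖v‖ + ‖u‖), norm_sub_rev u v]
      nlinarith [abs_norm_sub_norm_le v u, abs_nonneg (‖v‖ - ‖u‖), norm_nonneg (v - u)]
    rw [inv_mul_eq_div, le_div_iff₀ (NNReal.coe_pos.mpr hh)]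
    linarith
  calc dist (sphereChart p u) (sphereChart p v)
      = ‖(u - v) + (√(1 - ‖u‖ ^ 2) - √(1 - ‖v‖ ^ 2)) • p‖ := by
        rw [dist_eq_norm, sphereChart, sphereChart, sub_smul]; abel_nf
    _ ≤ ‖u - v‖ + |√(1 - ‖u‖ ^ 2) - √(1 - ‖v‖ ^ 2)| := by
        grw [norm_add_le, norm_smul, hp, mul_one, Real.norm_eq_abs]
    _ ≤ ↑(1 + h⁻¹) * dist u v := by
        rw [dist_eq_norm]; push_cast; linarith

theorem inner_sub_inner_smul_self (hp : ‖p‖ = 1) (z : E) : ⟪p, z - ⟪p, z⟫ • p⟫ = 0 := by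
  rw [inner_sub_right, inner_smul_right, real_inner_self_eq_norm_sq, hp]; ring

theorem norm_sub_inner_smul_sq (hp : ‖p‖ = 1) (z : E) :
    ‖z - ⟪p, z⟫ • p‖ ^ 2 = ‖z‖ ^ 2 - ⟪p, z⟫ ^ 2 := by
  rw [norm_sub_sq_real, inner_smul_right, norm_smul, hp, mul_one, Real.norm_eq_abs, sq_abs,
    real_inner_comm]
  ring

theorem sphereChart_sub_inner_smul (hp : ‖p‖ = 1) {z : E} (hz : ‖z‖ = 1) (hpz : 0 ≤ ⟪p, z⟫) :
    sphereChart p (z - ⟪p, z⟫ • p) = z := by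
  rw [sphereChart, norm_sub_inner_smul_sq hp, hz, one_pow, sub_sub_cancel, sqrt_sq hpz,
    sub_add_cancel]

theorem sphereCap_subset_image_sphereChart (hp : ‖p‖ = 1) :
    sphereCap p h ⊆ (sphereChart p ∘ (↑)) '' sphereChartDomain p h := by
  rintro z ⟨hz, hpz : (h : ℝ) ≤ ⟪p, z⟫⟩
  rw [mem_sphere_zero_iff_norm] at hz
  refine ⟨⟨z - ⟪p, z⟫ • p, Submodule.mem_orthogonal_singleton_iff_inner_right.mpr
    (inner_sub_inner_smul_self hp z)⟩, ?_, sphereChart_sub_inner_smul hp hz (h.2.trans hpz)⟩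
  change ‖z - ⟪p, z⟫ • p‖ ^ 2 ≤ 1 - h ^ 2
  rw [norm_sub_inner_smul_sq hp, hz]
  nlinarith [h.2]

theorem sq_norm_le_sq_norm_sphereChart_sub {u : E} (hu : ⟪p, u⟫ = 0) :
    ‖u‖ ^ 2 ≤ ‖sphereChart p u - p‖ ^ 2 := by
  have hsub : sphereChart p u - p = u + (√(1 - ‖u‖ ^ 2) - 1) • p := by
    rw [sphereChart, sub_smul, one_smul]; abel
  rw [hsub, norm_add_sq_real, inner_smul_right, real_inner_comm, hu]
  nlinarith [sq_nonneg ‖(√(1 - ‖u‖ ^ 2) - 1) • p‖]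

theorem lipschitzOnWith_sphereChart_comp_subtypeVal (hp : ‖p‖ = 1) (hh : 0 < h) :
    LipschitzOnWith (1 + h⁻¹) (sphereChart p ∘ (↑)) (sphereChartDomain p h) := by
  have := (lipschitzOnWith_sphereChart hp hh).comp
    (LipschitzWith.subtype_val ((ℝ ∙ p)ᗮ : Set E)).lipschitzOnWith
    (s := sphereChartDomain p h) fun _ hu => hu
  rwa [mul_one] at this

theorem sphereCap_mem_nhdsWithin_sphere (hp : ‖p‖ = 1) {h : ℝ} (hh : h < 1) :
    sphereCap p h ∈ 𝓝[Metric.sphere 0 1] p :=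
  mem_nhdsWithin.mpr ⟨{z | h < ⟪p, z⟫}, isOpen_lt continuous_const (by fun_prop),
    by simpa [real_inner_self_eq_norm_sq, hp] using hh,
    fun z ⟨(hz : h < ⟪p, z⟫), hzS⟩ => ⟨hzS, hz.le⟩⟩

end SphereChart

theorem integrableOn_exp_neg_mul {X : Type*} [TopologicalSpace X] [MeasurableSpace X]
    [OpensMeasurableSpace X] {μ : Measure X} {s : Set X} (hs : μ s ≠ ∞) {q : X → ℝ}
    (hq : Continuous q) (hq₀ : ∀ x, 0 ≤ q x) {b : ℝ} (hb : 0 ≤ b) :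
    IntegrableOn (fun x => exp (-b * q x)) s μ :=
  Measure.integrableOn_of_bounded (M := 1) hs (by fun_prop) <| ae_of_all _ fun x => by
    rw [norm_of_nonneg (exp_pos _).le, exp_le_one_iff]
    nlinarith [hq₀ x]

section SphereCap

variable {E : Type*} [NormedAddCommGroup E] [InnerProductSpace ℝ E] [FiniteDimensional ℝ E]
  [MeasurableSpace E] [BorelSpace E] {p : E} {h : ℝ≥0}

theorem hausdorffMeasure_sphereChartDomain_lt_top :
    μH[finrank ℝ (ℝ ∙ p)ᗮ] (sphereChartDomain p h) < ∞ :=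
  (measure_mono sphereChartDomain_subset_closedBall).trans_lt measure_closedBall_lt_top

theorem hausdorffMeasure_sphereCap_lt_top (hp : ‖p‖ = 1) (hh : 0 < h) :
    μH[finrank ℝ (ℝ ∙ p)ᗮ] (sphereCap p h) < ∞ :=
  calc μH[finrank ℝ (ℝ ∙ p)ᗮ] (sphereCap p h)
      ≤ μH[finrank ℝ (ℝ ∙ p)ᗮ] ((sphereChart p ∘ (↑)) '' sphereChartDomain p h) :=
        measure_mono (sphereCap_subset_image_sphereChart hp)
    _ ≤ ((1 + h⁻¹ : ℝ≥0) : ℝ≥0∞) ^ (finrank ℝ (ℝ ∙ p)ᗮ : ℝ) *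
          μH[finrank ℝ (ℝ ∙ p)ᗮ] (sphereChartDomain p h) :=
        (lipschitzOnWith_sphereChart_comp_subtypeVal hp hh).hausdorffMeasure_image_le
          (by positivity)
    _ < ∞ := ENNReal.mul_lt_top (by finiteness) hausdorffMeasure_sphereChartDomain_lt_top

theorem setIntegral_sphereCap_le_setIntegral_sphereChartDomain (hp : ‖p‖ = 1) (hh : 0 < h)
    {b : ℝ} (hb : 0 ≤ b) :
    ∫ z in sphereCap p h, exp (-b * ‖z - p‖ ^ 2) ∂μH[finrank ℝ (ℝ ∙ p)ᗮ] ≤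
      (1 + (h : ℝ)⁻¹) ^ finrank ℝ (ℝ ∙ p)ᗮ *
        ∫ u in sphereChartDomain p h, exp (-b * ‖u‖ ^ 2) ∂μH[finrank ℝ (ℝ ∙ p)ᗮ] := by
  have hfin := (hausdorffMeasure_sphereChartDomain_lt_top (p := p) (h := h)).ne
  calc ∫ z in sphereCap p h, exp (-b * ‖z - p‖ ^ 2) ∂μH[finrank ℝ (ℝ ∙ p)ᗮ]
      ≤ ((1 + h⁻¹ : ℝ≥0) : ℝ) ^ (finrank ℝ (ℝ ∙ p)ᗮ : ℝ) *
          ∫ u in sphereChartDomain p h,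
            exp (-b * ‖sphereChart p u - p‖ ^ 2) ∂μH[finrank ℝ (ℝ ∙ p)ᗮ] :=
        (lipschitzOnWith_sphereChart_comp_subtypeVal hp hh).setIntegral_hausdorffMeasure_le
          ((continuous_sphereChart p).comp continuous_subtype_val).measurable
          (sphereCap_subset_image_sphereChart hp) (by positivity) (fun _ => (exp_pos _).le)
          (by fun_prop)
          (integrableOn_exp_neg_mul hfin (by fun_prop) (fun _ => sq_nonneg _) hb)
    _ ≤ (1 + (h : ℝ)⁻¹) ^ finrank ℝ (ℝ ∙ p)ᗮ *
          ∫ u in sphereChartDomain p h, exp (-b * ‖u‖ ^ 2) ∂μH[finrank ℝ (ℝ ∙ p)ᗮ] := by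
        rw [rpow_natCast]
        push_cast
        refine mul_le_mul_of_nonneg_left (setIntegral_mono_on
          (integrableOn_exp_neg_mul hfin (by fun_prop) (fun _ => sq_nonneg _) hb)
          (integrableOn_exp_neg_mul hfin (by fun_prop) (fun _ => sq_nonneg _) hb)
          (measurableSet_le (by fun_prop) (by fun_prop)) fun u _ => ?_) (by positivity)
        have hu : ⟪p, (u : E)⟫ = 0 := Submodule.mem_orthogonal_singleton_iff_inner_right.mp u.2
        have hle := sq_norm_le_sq_norm_sphereChart_sub hu
        rw [Submodule.norm_coe] at hle
        rw [exp_le_exp]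
        nlinarith [mul_le_mul_of_nonneg_left hle hb]

theorem setIntegral_sphereCap_exp_neg_mul_sq_norm_sub_le {n : ℕ} (hE : finrank ℝ E = n + 1)
    (hp : ‖p‖ = 1) (hh : 0 < h) {b : ℝ} (hb : 0 ≤ b) :
    ∫ z in sphereCap p h, exp (-b * ‖z - p‖ ^ 2) ∂μH[n] ≤
      (1 + (h : ℝ)⁻¹) ^ n * (hausdorffScalarFactor n)⁻¹ * (exp 1 * π ^ (n / 2 : ℝ)) *
        (1 + b) ^ (-(n / 2 : ℝ)) := by
  have : Fact (finrank ℝ E = n + 1) := ⟨hE⟩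
  have hk : finrank ℝ (ℝ ∙ p)ᗮ = n :=
    Submodule.finrank_orthogonal_span_singleton (norm_ne_zero_iff.mp (hp ▸ one_ne_zero))
  have hcap := setIntegral_sphereCap_le_setIntegral_sphereChartDomain hp hh hb
  rw [InnerProductSpace.hausdorffMeasure_finrank_eq_smul_volume, Measure.restrict_smul,
    integral_smul_nnreal_measure, NNReal.smul_def, smul_eq_mul] at hcap
  have hball := setIntegral_exp_neg_mul_sq_norm_le (s := sphereChartDomain p h)
    measurableSet_sphereChartDomain sphereChartDomain_subset_closedBall hb
  rw [hk] at hcap hball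
  refine hcap.trans ?_
  rw [mul_assoc, mul_assoc, mul_assoc]
  gcongr
  linarith

end SphereCap

section Sphere

variable {E : Type*} [NormedAddCommGroup E] [InnerProductSpace ℝ E] [MeasurableSpace E]
  [BorelSpace E] {n : ℕ}

theorem hausdorffMeasure_sphere_lt_top (hE : finrank ℝ E = n + 1) :
    μH[n] (Metric.sphere (0 : E) 1) < ∞ := by
  have : Fact (finrank ℝ E = n + 1) := ⟨hE⟩
  have : FiniteDimensional ℝ E := .of_fact_finrank_eq_succ n
  refine (isCompact_sphere 0 1).measure_lt_top_of_nhdsWithin fun p hp => ?_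
  rw [mem_sphere_zero_iff_norm] at hp
  rw [← Submodule.finrank_orthogonal_span_singleton (𝕜 := ℝ) (n := n)
    (norm_ne_zero_iff.mp (hp ▸ one_ne_zero))]
  exact ⟨_, sphereCap_mem_nhdsWithin_sphere hp (h := (1 / 2 : ℝ≥0)) (by norm_num),
    hausdorffMeasure_sphereCap_lt_top hp (by norm_num)⟩

theorem setIntegral_sphere_sdiff_exp_neg_mul_sq_norm_sub_le {μ : Measure E}
    (hS : μ (Metric.sphere 0 1) ≠ ∞) {p : E} (hp : ‖p‖ = 1) (h : ℝ) {b : ℝ} (hb : 0 ≤ b) :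
    ∫ z in Metric.sphere 0 1 \ {z | h ≤ ⟪p, z⟫}, exp (-b * ‖z - p‖ ^ 2) ∂μ ≤
      μ.real (Metric.sphere 0 1) * exp (-(2 * (1 - h) * b)) := by
  have hfin : μ (Metric.sphere 0 1 \ {z | h ≤ ⟪p, z⟫}) ≠ ∞ :=
    ((measure_mono sdiff_subset).trans_lt hS.lt_top).ne
  calc ∫ z in Metric.sphere 0 1 \ {z | h ≤ ⟪p, z⟫}, exp (-b * ‖z - p‖ ^ 2) ∂μ
      ≤ ∫ z in Metric.sphere 0 1 \ {z | h ≤ ⟪p, z⟫}, exp (-(2 * (1 - h) * b)) ∂μ := by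
        refine setIntegral_mono_on
          (integrableOn_exp_neg_mul hfin (by fun_prop) (fun _ => sq_nonneg _) hb)
          (integrableOn_const hfin) (Metric.isClosed_sphere.measurableSet.diff
            (measurableSet_le measurable_const (by fun_prop))) fun z ⟨hzS, hzp⟩ => ?_
        have hzp : ⟪p, z⟫ < h := not_le.mp hzp
        have hsq : ‖z - p‖ ^ 2 = 2 - 2 * ⟪p, z⟫ := by
          rw [norm_sub_sq_real, mem_sphere_zero_iff_norm.mp hzS, hp, real_inner_comm]; ring
        rw [exp_le_exp, hsq]
        nlinarith
    _ = μ.real (Metric.sphere 0 1 \ {z | h ≤ ⟪p, z⟫}) * exp (-(2 * (1 - h) * b)) := by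
        rw [setIntegral_const, smul_eq_mul]
    _ ≤ μ.real (Metric.sphere 0 1) * exp (-(2 * (1 - h) * b)) :=
        mul_le_mul_of_nonneg_right (measureReal_mono sdiff_subset hS) (exp_pos _).le

theorem exists_setIntegral_sphere_exp_neg_mul_sq_norm_sub_le (hE : finrank ℝ E = n + 1) :
    ∃ C > 0, ∀ b, 0 ≤ b → ∀ p : E, ‖p‖ = 1 →
      ∫ z in Metric.sphere 0 1, exp (-b * ‖z - p‖ ^ 2) ∂μH[n] ≤ C * (1 + b) ^ (-(n / 2 : ℝ)) := by
  have : FiniteDimensional ℝ E := Module.finite_of_finrank_eq_succ hE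
  have hS := hausdorffMeasure_sphere_lt_top hE
  have hκ := hausdorffScalarFactor_pos n
  obtain ⟨C₁, hC₁, hdecay⟩ :=
    exists_exp_neg_mul_le_mul_one_add_rpow_neg (s := n / 2) (by positivity) one_pos
  refine ⟨3 ^ n * (hausdorffScalarFactor n)⁻¹ * (exp 1 * π ^ (n / 2 : ℝ)) +
    μH[n].real (Metric.sphere (0 : E) 1) * C₁, by positivity, fun b hb p hp => ?_⟩
  have hcap := setIntegral_sphereCap_exp_neg_mul_sq_norm_sub_le hE hp (h := 1 / 2) (by norm_num) hb
  have hfar := setIntegral_sphere_sdiff_exp_neg_mul_sq_norm_sub_le hS.ne hp (1 / 2 : ℝ≥0) hb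
  rw [show 1 + ((1 / 2 : ℝ≥0) : ℝ)⁻¹ = 3 by norm_num] at hcap
  rw [show 2 * (1 - ((1 / 2 : ℝ≥0) : ℝ)) * b = 1 * b by norm_num] at hfar
  rw [← integral_inter_add_sdiff (measurableSet_le measurable_const (by fun_prop) :
      MeasurableSet {z : E | ((1 / 2 : ℝ≥0) : ℝ) ≤ ⟪p, z⟫})
    (integrableOn_exp_neg_mul hS.ne (by fun_prop) (fun _ => sq_nonneg _) hb)]
  refine (add_le_add hcap (hfar.trans (mul_le_mul_of_nonneg_left (hdecay b hb)
    measureReal_nonneg))).trans_eq ?_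
  ring

end Sphere

section Main

variable {E : Type*} [NormedAddCommGroup E] [InnerProductSpace ℝ E]

theorem norm_smul_add_smul_sq {e z : E} (he : ‖e‖ = 1) (hz : ‖z‖ = 1) (r s : ℝ) :
    ‖r • e + s • z‖ ^ 2 = (r - s) ^ 2 + r * s * ‖z + e‖ ^ 2 := by
  rw [norm_add_sq_real, norm_add_sq_real, norm_smul, norm_smul, inner_smul_left,
    inner_smul_right, he, hz, real_inner_comm, Real.norm_eq_abs, Real.norm_eq_abs, mul_one,
    mul_one, sq_abs, sq_abs]
  simp only [conj_trivial]
  ring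

theorem exists_norm_eq_one_eq_norm_smul [Nontrivial E] (x : E) :
    ∃ e : E, ‖e‖ = 1 ∧ x = ‖x‖ • e := by
  rcases eq_or_ne x 0 with rfl | hx
  · obtain ⟨e, he⟩ := exists_norm_eq E zero_le_one
    exact ⟨e, he, by simp⟩
  · exact ⟨‖x‖⁻¹ • x, norm_smul_inv_norm hx, by
      rw [smul_smul, mul_inv_cancel₀ (norm_ne_zero_iff.mpr hx), one_smul]⟩

variable [MeasurableSpace E] [BorelSpace E]

theorem exists_setIntegral_sphere_exp_neg_sq_norm_add_smul_le {n : ℕ}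
    (hE : finrank ℝ E = n + 1) {a c : ℝ} (ha : 0 < a) (hc : 0 < c) :
    ∃ C > 0, ∀ t > 0, ∀ x : E,
      ∫ z in Metric.sphere 0 1, exp (-‖x + (c * t) • z‖ ^ 2 / (a * t)) ∂μH[n] ≤
        C * (1 + t) ^ (-(n / 2 : ℝ)) * exp (-(‖x‖ - c * t) ^ 2 / (4 * a * t)) := by
  have : Nontrivial E := Module.nontrivial_of_finrank_eq_succ hE
  obtain ⟨C₁, hC₁, hsphere⟩ := exists_setIntegral_sphere_exp_neg_mul_sq_norm_sub_le hE
  obtain ⟨C₂, hC₂, hscalar⟩ := exists_exp_mul_one_add_rpow_neg_le (s := n / 2) (by positivity) ha hc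
  refine ⟨C₁ * C₂, by positivity, fun t ht x => ?_⟩
  obtain ⟨e, he, hx⟩ := exists_norm_eq_one_eq_norm_smul x
  have hsplit : ∀ z ∈ Metric.sphere (0 : E) 1, exp (-‖x + (c * t) • z‖ ^ 2 / (a * t)) =
      exp (-(‖x‖ - c * t) ^ 2 / (a * t)) * exp (-(c * ‖x‖ / a) * ‖z - -e‖ ^ 2) := by
    intro z hz
    rw [← exp_add, sub_neg_eq_add]
    nth_rw 1 [hx]
    rw [norm_smul_add_smul_sq he (mem_sphere_zero_iff_norm.mp hz)]
    congr 1
    field_simp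
    ring
  rw [setIntegral_congr_fun Metric.isClosed_sphere.measurableSet hsplit, integral_const_mul]
  calc exp (-(‖x‖ - c * t) ^ 2 / (a * t)) *
        ∫ z in Metric.sphere 0 1, exp (-(c * ‖x‖ / a) * ‖z - -e‖ ^ 2) ∂μH[n]
      ≤ exp (-(‖x‖ - c * t) ^ 2 / (a * t)) * (C₁ * (1 + c * ‖x‖ / a) ^ (-(n / 2 : ℝ))) := by
        gcongr
        exact hsphere _ (by positivity) (-e) (by rw [norm_neg, he])
    _ = C₁ * (exp (-(‖x‖ - c * t) ^ 2 / (a * t)) * (1 + c * ‖x‖ / a) ^ (-(n / 2 : ℝ))) := by ring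
    _ ≤ C₁ * (C₂ * (1 + t) ^ (-(n / 2 : ℝ)) * exp (-(‖x‖ - c * t) ^ 2 / (4 * a * t))) := by
        exact mul_le_mul_of_nonneg_left (hscalar t ht ‖x‖ (norm_nonneg x)) hC₁.le
    _ = C₁ * C₂ * (1 + t) ^ (-(n / 2 : ℝ)) * exp (-(‖x‖ - c * t) ^ 2 / (4 * a * t)) := by ring

end Main

/-- Bound for the spherical integral of a translated Gaussian:
`∫_{|z|=1} exp(-|x+ctz|²/(at)) dS(z) ≤ C(d) (1+t)^{-(d-1)/2} exp(-(|x|-ct)²/(4at))`.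
The surface measure on the unit sphere is the `(d-1)`-dimensional Hausdorff measure. -/
theorem sphere_gaussian_integral_bound (d : ℕ) (hd : 1 ≤ d) (a c : ℝ)
    (ha : 0 < a) (hc : 0 < c) :
    ∃ C : ℝ, 0 < C ∧ ∀ t : ℝ, 0 < t → ∀ x : EuclideanSpace ℝ (Fin d),
      (∫ z in Metric.sphere (0 : EuclideanSpace ℝ (Fin d)) 1,
          exp (-‖x + (c * t) • z‖ ^ 2 / (a * t)) ∂(μH[(d : ℝ) - 1])) ≤
        C * (1 + t) ^ (-((d : ℝ) - 1) / 2) * exp (-(‖x‖ - c * t) ^ 2 / (4 * a * t)) := by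
  obtain ⟨n, rfl⟩ : ∃ n, d = n + 1 := ⟨d - 1, by omega⟩
  simpa only [Nat.cast_add, Nat.cast_one, add_sub_cancel_right, neg_div] using
    exists_setIntegral_sphere_exp_neg_sq_norm_add_smul_le finrank_euclideanSpace_fin ha hc
end

section
/- For d ≥ 1, q ≥ 1, n ≥ 0, c > 0, ν > 0, there is a constant C such that for all t > 0, the weighted L^q norm of the translating Gaussian satisfies ‖ |x|^n exp(-(|x| - ct)²/(20νt)) ‖_{L^q(ℝ^d)} ≤ C t^{n/2 + d/(2q)} (1 + t)^{n/2 + (d-1)/(2q)}. -/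
/-!
In polar coordinates the `q`-th power of the norm is, up to the area of the unit sphere,
`∫₀^∞ y^m exp(-(a/t)(y - ct)²) dy` with `m = d - 1 + nq` and `a = q/(20ν)`. Since
`y ≤ |y - ct| + ct`, this is at most `2^m` times a centred Gaussian moment, of size
`t^((m+1)/2)`, plus `(ct)^m` times the Gaussian mass, of size `t^(m + 1/2)`. Both are
`O(t^((m+1)/2) (1+t)^(m/2))`, and taking `q`-th roots gives the bound.
-/

open MeasureTheory Real Set Metric
open scoped ENNReal

theorem integrable_abs_rpow_mul_exp_neg_mul_sq {b m : ℝ} (hb : 0 < b) (hm : -1 < m) :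
    Integrable fun s : ℝ => |s| ^ m * exp (-b * s ^ 2) := by
  -- polar coordinates on `ℝ`: `f |·|` is integrable iff `f` is integrable on `Ioi 0`
  have h := (integrable_fun_norm_addHaar (volume : Measure ℝ)
    (f := fun y => y ^ m * exp (-b * y ^ 2))).2
  simpa using h (by simpa using integrableOn_rpow_mul_exp_neg_mul_sq hb hm)

theorem integral_abs_rpow_mul_exp_neg_mul_sq {b m : ℝ} (hb : 0 < b) (hm : -1 < m) :
    ∫ s : ℝ, |s| ^ m * exp (-b * s ^ 2) = b ^ (-(m + 1) / 2) * Gamma ((m + 1) / 2) := by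
  have h := integral_rpow_mul_exp_neg_mul_rpow two_pos hm hb
  simp only [rpow_two] at h
  have habs := integral_comp_abs (f := fun s => s ^ m * exp (-b * s ^ 2))
  simp only [sq_abs] at habs
  rw [habs, h]
  ring

theorem rpow_add_le_two_rpow_mul_rpow_add_rpow {x y m : ℝ} (hx : 0 ≤ x) (hy : 0 ≤ y)
    (hm : 0 ≤ m) : (x + y) ^ m ≤ 2 ^ m * (x ^ m + y ^ m) := by
  wlog hxy : x ≤ y generalizing x y
  · simpa only [add_comm] using this hy hx (le_of_not_ge hxy)
  calc (x + y) ^ m ≤ (2 * y) ^ m := by gcongr; linarith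
    _ = 2 ^ m * y ^ m := mul_rpow zero_le_two hy
    _ ≤ 2 ^ m * (x ^ m + y ^ m) := by gcongr; linarith [rpow_nonneg hx m]

section ShiftedGaussian

variable {b r m : ℝ}

theorem rpow_mul_exp_neg_mul_sub_sq_le (hm : 0 ≤ m) (hr : 0 ≤ r) {y : ℝ} (hy : 0 ≤ y) :
    y ^ m * exp (-b * (y - r) ^ 2) ≤
      2 ^ m * ((|y - r| ^ m + r ^ m) * exp (-b * (y - r) ^ 2)) := by
  have hyr : y ≤ |y - r| + r := by linarith [le_abs_self (y - r)]
  calc y ^ m * exp (-b * (y - r) ^ 2)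
      ≤ (|y - r| + r) ^ m * exp (-b * (y - r) ^ 2) := by gcongr
    _ ≤ 2 ^ m * (|y - r| ^ m + r ^ m) * exp (-b * (y - r) ^ 2) := by
        gcongr; exact rpow_add_le_two_rpow_mul_rpow_add_rpow (abs_nonneg _) hr hm
    _ = _ := mul_assoc _ _ _

theorem integrable_abs_sub_rpow_add_mul_exp_neg_mul_sub_sq (hb : 0 < b) (hm : -1 < m) :
    Integrable fun y : ℝ => (|y - r| ^ m + r ^ m) * exp (-b * (y - r) ^ 2) := by
  have h : Integrable fun s : ℝ => (|s| ^ m + r ^ m) * exp (-b * s ^ 2) := by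
    simpa only [add_mul] using (integrable_abs_rpow_mul_exp_neg_mul_sq hb hm).fun_add
      ((integrable_exp_neg_mul_sq hb).const_mul (r ^ m))
  exact h.comp_sub_right r

theorem integral_abs_sub_rpow_add_mul_exp_neg_mul_sub_sq (hb : 0 < b) (hm : -1 < m) :
    ∫ y : ℝ, (|y - r| ^ m + r ^ m) * exp (-b * (y - r) ^ 2) =
      b ^ (-(m + 1) / 2) * Gamma ((m + 1) / 2) + r ^ m * (b ^ (-1 / 2 : ℝ) * Gamma (1 / 2)) := by
  have h0 := integral_abs_rpow_mul_exp_neg_mul_sq hb (m := 0) (by norm_num)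
  simp only [rpow_zero, one_mul, zero_add] at h0
  rw [integral_sub_right_eq_self (fun s => (|s| ^ m + r ^ m) * exp (-b * s ^ 2)) r]
  simp only [add_mul]
  rw [integral_add (integrable_abs_rpow_mul_exp_neg_mul_sq hb hm)
      (by simpa only [mul_assoc] using (integrable_exp_neg_mul_sq hb).const_mul (r ^ m)),
    integral_abs_rpow_mul_exp_neg_mul_sq hb hm]
  simp only [integral_const_mul, h0]

theorem integrableOn_Ioi_rpow_mul_exp_neg_mul_sub_sq (hb : 0 < b) (hm : 0 ≤ m) (hr : 0 ≤ r) :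
    IntegrableOn (fun y : ℝ => y ^ m * exp (-b * (y - r) ^ 2)) (Ioi 0) := by
  have hint := integrable_abs_sub_rpow_add_mul_exp_neg_mul_sub_sq (r := r) hb (by linarith : -1 < m)
  refine (hint.const_mul (2 ^ m)).integrableOn.mono' (by fun_prop) ?_
  filter_upwards [ae_restrict_mem measurableSet_Ioi] with y (hy : 0 < y)
  rw [norm_of_nonneg (by positivity)]
  exact rpow_mul_exp_neg_mul_sub_sq_le hm hr hy.le

theorem integral_Ioi_rpow_mul_exp_neg_mul_sub_sq_le (hb : 0 < b) (hm : 0 ≤ m) (hr : 0 ≤ r) :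
    ∫ y in Ioi 0, y ^ m * exp (-b * (y - r) ^ 2) ≤
      2 ^ m * (b ^ (-(m + 1) / 2) * Gamma ((m + 1) / 2) +
        r ^ m * (b ^ (-1 / 2 : ℝ) * Gamma (1 / 2))) := by
  have hint := integrable_abs_sub_rpow_add_mul_exp_neg_mul_sub_sq (r := r) hb (by linarith : -1 < m)
  calc ∫ y in Ioi 0, y ^ m * exp (-b * (y - r) ^ 2)
      ≤ ∫ y in Ioi 0, 2 ^ m * ((|y - r| ^ m + r ^ m) * exp (-b * (y - r) ^ 2)) := by
        refine integral_mono_of_nonneg ?_ (hint.const_mul _).integrableOn ?_ <;>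
          filter_upwards [ae_restrict_mem measurableSet_Ioi] with y (hy : 0 < y)
        · positivity
        · exact rpow_mul_exp_neg_mul_sub_sq_le hm hr hy.le
    _ ≤ ∫ y, 2 ^ m * ((|y - r| ^ m + r ^ m) * exp (-b * (y - r) ^ 2)) :=
        setIntegral_le_integral (hint.const_mul _) (.of_forall fun y => by positivity)
    _ = _ := by
        rw [integral_const_mul, integral_abs_sub_rpow_add_mul_exp_neg_mul_sub_sq hb (by linarith)]

end ShiftedGaussian

theorem exists_integral_Ioi_rpow_mul_exp_neg_div_mul_sub_sq_le {m a c : ℝ} (hm : 0 ≤ m)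
    (ha : 0 < a) (hc : 0 ≤ c) :
    ∃ K : ℝ, 0 < K ∧ ∀ t : ℝ, 0 < t →
      ∫ y in Ioi 0, y ^ m * exp (-(a / t) * (y - c * t) ^ 2) ≤
        K * t ^ ((m + 1) / 2) * (1 + t) ^ (m / 2) := by
  set A := a ^ (-(m + 1) / 2) * Gamma ((m + 1) / 2)
  set B := c ^ m * (a ^ (-1 / 2 : ℝ) * Gamma (1 / 2))
  refine ⟨2 ^ m * (A + B), by positivity, fun t ht => ?_⟩
  have hdiv : ∀ e : ℝ, (a / t) ^ e = a ^ e * t ^ (-e) := fun e => by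
    rw [div_rpow ha.le ht.le, rpow_neg ht.le, div_eq_mul_inv]
  have htm : t ^ (m / 2) ≤ (1 + t) ^ (m / 2) := by gcongr; linarith
  have hS : 1 ≤ (1 + t) ^ (m / 2) := one_le_rpow (by linarith) (by positivity)
  have hT : 0 ≤ t ^ ((m + 1) / 2) := by positivity
  have ht1 : t ^ (-(-(m + 1) / 2)) = t ^ ((m + 1) / 2) := by rw [neg_div, neg_neg]
  have ht2 : t ^ m * t ^ (-(-1 / 2 : ℝ)) = t ^ ((m + 1) / 2) * t ^ (m / 2) := by
    rw [← rpow_add ht, ← rpow_add ht]; ring_nf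
  calc ∫ y in Ioi 0, y ^ m * exp (-(a / t) * (y - c * t) ^ 2)
      ≤ 2 ^ m * ((a / t) ^ (-(m + 1) / 2) * Gamma ((m + 1) / 2) +
          (c * t) ^ m * ((a / t) ^ (-1 / 2 : ℝ) * Gamma (1 / 2))) :=
        integral_Ioi_rpow_mul_exp_neg_mul_sub_sq_le (div_pos ha ht) hm (by positivity)
    _ = 2 ^ m * (A * t ^ ((m + 1) / 2) + B * (t ^ ((m + 1) / 2) * t ^ (m / 2))) := by
        rw [mul_rpow hc ht.le, hdiv, hdiv, ht1]
        linear_combination (2 ^ m * c ^ m * a ^ (-1 / 2 : ℝ) * Gamma (1 / 2)) * ht2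
    _ ≤ 2 ^ m * (A * (t ^ ((m + 1) / 2) * (1 + t) ^ (m / 2)) +
          B * (t ^ ((m + 1) / 2) * (1 + t) ^ (m / 2))) := by
        gcongr
        exact le_mul_of_one_le_right hT hS
    _ = 2 ^ m * (A + B) * t ^ ((m + 1) / 2) * (1 + t) ^ (m / 2) := by ring

theorem eLpNorm_fun_norm_addHaar {E : Type*} [NormedAddCommGroup E] [NormedSpace ℝ E]
    [FiniteDimensional ℝ E] [MeasurableSpace E] [BorelSpace E] [Nontrivial E] (μ : Measure E)
    [μ.IsAddHaarMeasure] {g : ℝ → ℝ} {q : ℝ} (hq : 0 < q)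
    (hg : IntegrableOn (fun y => y ^ (Module.finrank ℝ E - 1) * ‖g y‖ ^ q) (Ioi 0)) :
    eLpNorm (fun x => g ‖x‖) (ENNReal.ofReal q) μ =
      ENNReal.ofReal ((Module.finrank ℝ E * μ.real (ball 0 1) *
        ∫ y in Ioi 0, y ^ (Module.finrank ℝ E - 1) * ‖g y‖ ^ q) ^ (1 / q)) := by
  have hint : Integrable (fun x => ‖g ‖x‖‖ ^ q) μ :=
    (integrable_fun_norm_addHaar μ (f := fun y => ‖g y‖ ^ q)).2 hg
  rw [eLpNorm_eq_lintegral_rpow_enorm_toReal (by simpa using hq) ENNReal.ofReal_ne_top,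
    ENNReal.toReal_ofReal hq.le]
  simp_rw [← ofReal_norm, ENNReal.ofReal_rpow_of_nonneg (norm_nonneg _) hq.le]
  rw [← ofReal_integral_eq_lintegral_ofReal hint (.of_forall fun x => by positivity),
    ENNReal.ofReal_rpow_of_nonneg (integral_nonneg fun x => by positivity) (by positivity),
    integral_fun_norm_addHaar μ (fun y => ‖g y‖ ^ q), nsmul_eq_mul, smul_eq_mul, mul_assoc]
  simp_rw [smul_eq_mul]

theorem rpow_mul_norm_rpow_mul_exp_neg_sq_div {y : ℝ} (hy : 0 < y) (k n q s D : ℝ) :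
    y ^ k * ‖y ^ n * exp (-(y - s) ^ 2 / D)‖ ^ q =
      y ^ (k + n * q) * exp (-(q / D) * (y - s) ^ 2) := by
  rw [norm_of_nonneg (by positivity), mul_rpow (by positivity) (by positivity), ← rpow_mul hy.le,
    ← exp_mul, ← mul_assoc, ← rpow_add hy]
  congr 2
  ring

theorem mul_rpow_mul_rpow_rpow_one_div {A x y α β : ℝ} (hA : 0 ≤ A) (hx : 0 ≤ x) (hy : 0 ≤ y)
    (q : ℝ) : (A * x ^ α * y ^ β) ^ (1 / q) = A ^ (1 / q) * x ^ (α / q) * y ^ (β / q) := by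
  rw [mul_rpow (by positivity) (by positivity), mul_rpow hA (by positivity), ← rpow_mul hx,
    ← rpow_mul hy, mul_one_div, mul_one_div]

/-- Weighted `L^q` bound for the translating Gaussian:
`‖ |x|^n exp(-(|x|-ct)²/(20νt)) ‖_{L^q(ℝ^d)} ≤ C t^{n/2+d/(2q)} (1+t)^{n/2+(d-1)/(2q)}`. -/
theorem translating_gaussian_weighted_norm (d : ℕ) (hd : 1 ≤ d) (q n c ν : ℝ)
    (hq : 1 ≤ q) (hn : 0 ≤ n) (hc : 0 < c) (hν : 0 < ν) :
    ∃ C : ℝ, 0 < C ∧ ∀ t : ℝ, 0 < t →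
      eLpNorm
          (fun x : EuclideanSpace ℝ (Fin d) =>
            ‖x‖ ^ n * exp (-(‖x‖ - c * t) ^ 2 / (20 * ν * t)))
          (ENNReal.ofReal q) volume ≤
        ENNReal.ofReal
          (C * t ^ (n / 2 + (d : ℝ) / (2 * q)) * (1 + t) ^ (n / 2 + ((d : ℝ) - 1) / (2 * q))) := by
  have hq0 : 0 < q := by linarith
  have : NeZero d := ⟨by omega⟩
  set m : ℝ := d - 1 + n * q
  set a : ℝ := q / (20 * ν)
  have hm : 0 ≤ m := by
    have : (1 : ℝ) ≤ d := by exact_mod_cast hd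
    nlinarith
  obtain ⟨K, hK, hrad⟩ :=
    exists_integral_Ioi_rpow_mul_exp_neg_div_mul_sub_sq_le hm (by positivity : 0 < a) hc.le
  set V := (d : ℝ) * (volume : Measure (EuclideanSpace ℝ (Fin d))).real (ball 0 1)
  have hV : 0 < V := mul_pos (by positivity)
    (ENNReal.toReal_pos (measure_ball_pos _ _ one_pos).ne' measure_ball_lt_top.ne)
  refine ⟨(V * K) ^ (1 / q), by positivity, fun t ht => ?_⟩
  set g : ℝ → ℝ := fun y => y ^ n * exp (-(y - c * t) ^ 2 / (20 * ν * t))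
  have hradial : ∀ y ∈ Ioi (0 : ℝ), y ^ (d - 1) * ‖g y‖ ^ q =
      y ^ m * exp (-(a / t) * (y - c * t) ^ 2) := fun y (hy : 0 < y) => by
    rw [← rpow_natCast, rpow_mul_norm_rpow_mul_exp_neg_sq_div hy, Nat.cast_sub hd, Nat.cast_one,
      ← div_div]
  have hint := (integrableOn_congr_fun hradial measurableSet_Ioi).2
    (integrableOn_Ioi_rpow_mul_exp_neg_mul_sub_sq (div_pos (by positivity) ht) hm (by positivity))
  have hrad_nonneg : 0 ≤ ∫ y in Ioi 0, y ^ m * exp (-(a / t) * (y - c * t) ^ 2) :=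
    setIntegral_nonneg measurableSet_Ioi fun y (hy : 0 < y) => by positivity
  calc _ = ENNReal.ofReal
          ((V * ∫ y in Ioi 0, y ^ m * exp (-(a / t) * (y - c * t) ^ 2)) ^ (1 / q)) := by
        have key := eLpNorm_fun_norm_addHaar (volume : Measure (EuclideanSpace ℝ (Fin d))) hq0
          (g := g) (by simpa using hint)
        rwa [finrank_euclideanSpace_fin, setIntegral_congr_fun measurableSet_Ioi hradial] at key
    _ ≤ ENNReal.ofReal ((V * (K * t ^ ((m + 1) / 2) * (1 + t) ^ (m / 2))) ^ (1 / q)) := by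
        grw [hrad t ht]
    _ = _ := by
        rw [← mul_assoc, ← mul_assoc,
          mul_rpow_mul_rpow_rpow_one_div (by positivity) ht.le (by positivity)]
        congr 4 <;> (simp only [m]; field_simp; ring)
end

section
/- For a Schwartz function a with zero mean on ℝ³ and Πa(x) = -(1/4π)∫(x-y)/|x-y|³ a(y)dy, the pointwise bound |(Πa)_i(x)| ≤ C(u₁(x) + u₂(x)) holds, where u₁(x) = |x|^{-1} ∫ |y||a(y)| / |x-y|² dy and u₂(x) = |x|^{-2} ∫ |y||a(y)| / |x-y| dy, for some absolute constant C. -/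
open MeasureTheory Real
open scoped ENNReal SchwartzMap
open Set Metric

noncomputable section

local notation "E3" => EuclideanSpace ℝ (Fin 3)

lemma kernel_bound (x y : E3) (hx : x ≠ 0) (hxy : y ≠ x) :
    ‖(‖x - y‖ ^ 3)⁻¹ • (x - y) - (‖x‖ ^ 3)⁻¹ • x‖ ≤
      5 * (‖y‖ * ((‖x‖ * ‖x - y‖ ^ 2)⁻¹ + (‖x‖ ^ 2 * ‖x - y‖)⁻¹)) := by
  set r := ‖x - y‖ with hr_def
  set R := ‖x‖ with hR_def
  set t := ‖y‖ with ht_def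
  have hr : 0 < r := by
    rw [hr_def, norm_pos_iff, sub_ne_zero]; exact fun h => hxy h.symm
  have hR : 0 < R := by rw [hR_def, norm_pos_iff]; exact hx
  have ht : 0 ≤ t := norm_nonneg _
  have h1 : R ≤ r + t := by
    calc R = ‖(x - y) + y‖ := by rw [sub_add_cancel]
    _ ≤ r + t := norm_add_le _ _
  have h2 : r ≤ R + t := by
    calc r = ‖x + (-y)‖ := by rw [← sub_eq_add_neg]
    _ ≤ R + t := by simpa using norm_add_le x (-y)
  rcases lt_or_ge r (R / 2) with hc | hc
  · -- r < R/2, so t ≥ R/2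
    have ht' : R / 2 ≤ t := by linarith
    have hb : ‖(‖x - y‖ ^ 3)⁻¹ • (x - y) - (‖x‖ ^ 3)⁻¹ • x‖ ≤ (r ^ 3)⁻¹ * r + (R ^ 3)⁻¹ * R := by
      refine (norm_sub_le _ _).trans ?_
      rw [norm_smul, norm_smul]
      simp [abs_of_nonneg, hr.le, hR.le, ← hr_def, ← hR_def]
    refine hb.trans ?_
    have hr2 : (0:ℝ) < r ^ 2 := by positivity
    calc (r ^ 3)⁻¹ * r + (R ^ 3)⁻¹ * R = (r ^ 2)⁻¹ + (R ^ 2)⁻¹ := by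
          field_simp
      _ ≤ (r ^ 2)⁻¹ + (r ^ 2)⁻¹ := by
          gcongr
          nlinarith
      _ = 4 * ((R / 2) * (R⁻¹ * (r ^ 2)⁻¹)) := by
          field_simp
          ring
      _ ≤ 5 * (t * (R⁻¹ * (r ^ 2)⁻¹)) := by
          have h5 : (0:ℝ) ≤ R⁻¹ * (r ^ 2)⁻¹ := by positivity
          nlinarith
      _ ≤ 5 * (t * ((R * r ^ 2)⁻¹ + (R ^ 2 * r)⁻¹)) := by
          rw [mul_inv]
          have h6 : (0:ℝ) ≤ (R ^ 2 * r)⁻¹ := by positivity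
          nlinarith [mul_nonneg ht h6]
  · -- R/2 ≤ r
    have veq : (‖x - y‖ ^ 3)⁻¹ • (x - y) - (‖x‖ ^ 3)⁻¹ • x
        = (-(r ^ 3)⁻¹) • y + ((r ^ 3)⁻¹ - (R ^ 3)⁻¹) • x := by
      rw [← hr_def, ← hR_def]; module
    rw [veq]
    have hb : ‖(-(r ^ 3)⁻¹) • y + ((r ^ 3)⁻¹ - (R ^ 3)⁻¹) • x‖
        ≤ (r ^ 3)⁻¹ * t + |(r ^ 3)⁻¹ - (R ^ 3)⁻¹| * R := by
      have n1 : ‖(-(r ^ 3)⁻¹) • y‖ = (r ^ 3)⁻¹ * t := by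
        rw [norm_smul, norm_neg, Real.norm_eq_abs, abs_of_pos (by positivity : (0:ℝ) < (r ^ 3)⁻¹)]
      have n2 : ‖((r ^ 3)⁻¹ - (R ^ 3)⁻¹) • x‖ = |(r ^ 3)⁻¹ - (R ^ 3)⁻¹| * R := by
        rw [norm_smul, Real.norm_eq_abs]
      exact (norm_add_le _ _).trans (by rw [n1, n2])
    refine hb.trans ?_
    have habs : |(r ^ 3)⁻¹ - (R ^ 3)⁻¹| ≤ t * (R ^ 2 + R * r + r ^ 2) / (r ^ 3 * R ^ 3) := by
      have e : (r ^ 3)⁻¹ - (R ^ 3)⁻¹ = (R ^ 3 - r ^ 3) / (r ^ 3 * R ^ 3) := by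
        field_simp
      rw [e, abs_div, abs_of_pos (by positivity : (0:ℝ) < r ^ 3 * R ^ 3)]
      gcongr
      have e2 : R ^ 3 - r ^ 3 = (R - r) * (R ^ 2 + R * r + r ^ 2) := by ring
      rw [e2, abs_mul, abs_of_pos (by positivity : (0:ℝ) < R ^ 2 + R * r + r ^ 2)]
      have h7 : |R - r| ≤ t := abs_le.mpr ⟨by linarith, by linarith⟩
      exact mul_le_mul_of_nonneg_right h7 (by positivity)
    have hstep : (r ^ 3)⁻¹ * t + |(r ^ 3)⁻¹ - (R ^ 3)⁻¹| * R
        ≤ (r ^ 3)⁻¹ * t + (t * (R ^ 2 + R * r + r ^ 2) / (r ^ 3 * R ^ 3)) * R := by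
      gcongr
    refine hstep.trans ?_
    have eL : (r ^ 3)⁻¹ * t + (t * (R ^ 2 + R * r + r ^ 2) / (r ^ 3 * R ^ 3)) * R
        = (t * (2 * R ^ 3 + R ^ 2 * r + R * r ^ 2)) / (r ^ 3 * R ^ 3) := by
      field_simp; ring
    have eR : 5 * (t * ((R * r ^ 2)⁻¹ + (R ^ 2 * r)⁻¹))
        = (5 * t * (R ^ 2 * r + R * r ^ 2)) / (r ^ 3 * R ^ 3) := by
      field_simp
    rw [eL, eR]
    have hc2 : R ≤ 2 * r := by linarith
    refine div_le_div_of_nonneg_right ?_ (by positivity)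
    have h8 : 0 ≤ t * R * (2 * R * r + 2 * r ^ 2 - R ^ 2) := by
      have : 0 ≤ 2 * R * r + 2 * r ^ 2 - R ^ 2 := by nlinarith
      exact mul_nonneg (mul_nonneg ht hR.le) this
    ring_nf at h8 ⊢
    linarith


lemma integrableOn_inv_pow_norm_ball (s : ℕ) (hs : s < 3) :
    IntegrableOn (fun y : E3 => (‖y‖ ^ s)⁻¹) (ball (0 : E3) 1) := by
  rcases Nat.eq_zero_or_pos s with rfl | hs0
  · simpa using (integrableOn_const (C := (1:ℝ)) (s := ball (0:E3) 1)).2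
      (Or.inr measure_ball_lt_top)
  have hsR : (0:ℝ) < s := by exact_mod_cast hs0
  have hmeas : Measurable fun y : E3 => (‖y‖ ^ s)⁻¹ := by fun_prop
  refine ⟨(hmeas.aestronglyMeasurable).restrict, ?_⟩
  rw [hasFiniteIntegral_iff_norm]
  have hnorm : ∀ y : E3, ENNReal.ofReal ‖(‖y‖ ^ s)⁻¹‖ = ENNReal.ofReal ((‖y‖ ^ s)⁻¹) := by
    intro y; rw [Real.norm_eq_abs, abs_of_nonneg (by positivity)]
  simp_rw [hnorm]
  rw [lintegral_eq_lintegral_meas_le _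
    (Filter.Eventually.of_forall (fun y => by positivity)) (hmeas.aemeasurable.restrict)]
  set B := volume (ball (0 : E3) 1) with hB
  have hBfin : B < ∞ := measure_ball_lt_top
  have key : ∀ t : ℝ, t ∈ Ioi (0:ℝ) →
      volume.restrict (ball (0 : E3) 1) {a : E3 | t ≤ (‖a‖ ^ s)⁻¹} ≤
        min B (ENNReal.ofReal (t ^ (-((3:ℝ)/s))) * B) := by
    intro t ht
    rw [mem_Ioi] at ht
    refine le_min (le_trans (measure_mono (subset_univ _)) ?_) ?_
    · rw [Measure.restrict_apply_univ]
    have hsub : {a : E3 | t ≤ (‖a‖ ^ s)⁻¹} ⊆ closedBall 0 ((t⁻¹) ^ ((s:ℝ)⁻¹)) := by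
      intro a ha
      simp only [mem_setOf_eq] at ha
      rw [mem_closedBall_zero_iff]
      have h1 : ‖a‖ ^ s ≤ t⁻¹ := by
        rcases eq_or_lt_of_le (by positivity : (0:ℝ) ≤ ‖a‖ ^ s) with h | h
        · rw [← h]; positivity
        · exact (le_inv_comm₀ ht h).mp ha
      have h2 : ((‖a‖ ^ s : ℝ)) ^ ((s:ℝ)⁻¹) ≤ (t⁻¹) ^ ((s:ℝ)⁻¹) :=
        Real.rpow_le_rpow (by positivity) h1 (by positivity)
      rwa [← Real.rpow_natCast ‖a‖ s, ← Real.rpow_mul (norm_nonneg a),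
        mul_inv_cancel₀ hsR.ne', Real.rpow_one] at h2
    refine le_trans (le_trans (Measure.restrict_le_self _) (measure_mono hsub)) ?_
    rw [Measure.addHaar_closedBall volume (0 : E3) (by positivity)]
    have hso : ((t⁻¹) ^ ((s:ℝ)⁻¹)) ^ (Module.finrank ℝ (EuclideanSpace ℝ (Fin 3))) =
        t ^ (-((3:ℝ)/s)) := by
      rw [finrank_euclideanSpace_fin, ← Real.rpow_natCast ((t⁻¹) ^ ((s:ℝ)⁻¹)) 3,
        ← Real.rpow_mul (by positivity), ← Real.rpow_neg_one t,
        ← Real.rpow_mul ht.le]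
      norm_num
      congr 1
      ring
    rw [hso]
  refine lt_of_le_of_lt (setLIntegral_mono' measurableSet_Ioi key) ?_
  calc ∫⁻ t in Ioi (0:ℝ), min B (ENNReal.ofReal (t ^ (-((3:ℝ)/s))) * B)
      ≤ ∫⁻ t in Ioc (0:ℝ) 1 ∪ Ioi 1, min B (ENNReal.ofReal (t ^ (-((3:ℝ)/s))) * B) :=
        lintegral_mono_set Ioi_subset_Ioc_union_Ioi
    _ ≤ (∫⁻ t in Ioc (0:ℝ) 1, min B (ENNReal.ofReal (t ^ (-((3:ℝ)/s))) * B)) +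
        ∫⁻ t in Ioi (1:ℝ), min B (ENNReal.ofReal (t ^ (-((3:ℝ)/s))) * B) :=
        lintegral_union_le _ _ _
    _ < ∞ := by
        refine ENNReal.add_lt_top.2 ⟨?_, ?_⟩
        · refine lt_of_le_of_lt (setLIntegral_mono' measurableSet_Ioc
            (fun t _ => min_le_left _ _)) ?_
          rw [setLIntegral_const]
          exact ENNReal.mul_lt_top hBfin (by simp)
        · refine lt_of_le_of_lt (setLIntegral_mono' measurableSet_Ioi
            (fun t _ => min_le_right _ _)) ?_
          rw [lintegral_mul_const' _ _ hBfin.ne]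
          refine ENNReal.mul_lt_top ?_ hBfin
          refine IntegrableOn.setLIntegral_lt_top ?_
          refine integrableOn_Ioi_rpow_of_lt ?_ one_pos
          have h3 : (s:ℝ) < 3 := by exact_mod_cast hs
          have h4 : (1:ℝ) < 3 / s := by rw [lt_div_iff₀ hsR]; linarith
          linarith

lemma integrableOn_inv_pow_norm_ball' (x : E3) (s : ℕ) (hs : s < 3) :
    IntegrableOn (fun y : E3 => (‖x - y‖ ^ s)⁻¹) (ball x 1) := by
  have hmp : MeasurePreserving (fun y : E3 => x - y) volume volume :=
    Measure.measurePreserving_sub_left volume x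
  have hemb : MeasurableEmbedding (fun y : E3 => x - y) :=
    (MeasurableEquiv.subLeft x).measurableEmbedding
  have hpre : (fun y : E3 => x - y) ⁻¹' (ball (0:E3) 1) = ball x 1 := by
    ext y
    simp [mem_ball, dist_eq_norm, norm_sub_rev x y]
  have := (hmp.integrableOn_comp_preimage hemb
    (f := fun z : E3 => (‖z‖ ^ s)⁻¹) (s := ball (0:E3) 1)).mpr
    (integrableOn_inv_pow_norm_ball s hs)
  rwa [hpre] at this

lemma integrable_schwartz_kernel (a : 𝓢(E3, ℝ)) (x : E3) (k s : ℕ) (hs : s < 3) :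
    Integrable (fun y : E3 => ‖y‖ ^ k * |a y| / ‖x - y‖ ^ s) := by
  obtain ⟨C, hCpos, hC⟩ := a.decay k 0
  simp only [norm_iteratedFDeriv_zero] at hC
  have hmeas : AEStronglyMeasurable (fun y : E3 => ‖y‖ ^ k * |a y| / ‖x - y‖ ^ s) volume := by
    refine Measurable.aestronglyMeasurable ?_
    have ha : Measurable fun y : E3 => a y := a.continuous.measurable
    fun_prop
  have hg2 : Integrable (fun y : E3 => ‖y‖ ^ k * |a y|) := by
    simpa [Real.norm_eq_abs] using a.integrable_pow_mul (μ := volume) k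
  have hg1 : Integrable ((ball x 1).indicator (fun y : E3 => C * (‖x - y‖ ^ s)⁻¹)) := by
    refine (IntegrableOn.integrable_indicator ?_ measurableSet_ball)
    exact (integrableOn_inv_pow_norm_ball' x s hs).const_mul C
  refine Integrable.mono' (hg1.add hg2) hmeas (Filter.Eventually.of_forall (fun y => ?_))
  have hnn : (0:ℝ) ≤ ‖y‖ ^ k * |a y| / ‖x - y‖ ^ s := by positivity
  rw [Real.norm_eq_abs, abs_of_nonneg hnn]
  simp only [Pi.add_apply]
  by_cases hy : y ∈ ball x 1
  · rw [indicator_of_mem hy]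
    have h1 : ‖y‖ ^ k * |a y| / ‖x - y‖ ^ s ≤ C * (‖x - y‖ ^ s)⁻¹ := by
      rw [div_eq_mul_inv]
      refine mul_le_mul_of_nonneg_right ?_ (by positivity)
      simpa [Real.norm_eq_abs] using hC y
    have h2 : (0:ℝ) ≤ ‖y‖ ^ k * |a y| := by positivity
    calc ‖y‖ ^ k * |a y| / ‖x - y‖ ^ s ≤ C * (‖x - y‖ ^ s)⁻¹ := h1
      _ ≤ C * (‖x - y‖ ^ s)⁻¹ + ‖y‖ ^ k * |a y| := le_add_of_nonneg_right h2
  · rw [indicator_of_notMem hy, zero_add]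
    have h3 : (1:ℝ) ≤ ‖x - y‖ := by
      rw [mem_ball, not_lt] at hy
      calc (1:ℝ) ≤ dist y x := hy
        _ = ‖x - y‖ := by rw [dist_eq_norm, norm_sub_rev]
    exact div_le_self (by positivity) (one_le_pow₀ h3)

lemma abs_coord_le_norm (v : EuclideanSpace ℝ (Fin 3)) (i : Fin 3) : |v i| ≤ ‖v‖ := by
  rw [EuclideanSpace.norm_eq]
  have h1 : |v i| = Real.sqrt (‖v i‖ ^ 2) := by
    rw [Real.sqrt_sq_eq_abs, abs_norm, Real.norm_eq_abs]
  rw [h1]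
  exact Real.sqrt_le_sqrt (Finset.single_le_sum (fun j _ => sq_nonneg ‖v j‖)
    (Finset.mem_univ i))

/-- The operator `Π a = ∇(Δ^{-1} a)`, given by the explicit kernel
`(Πa)(x) = -(1/4π) ∫ (x-y)/|x-y|³ a(y) dy`. -/
def PiOp (a : EuclideanSpace ℝ (Fin 3) → ℝ) (x : EuclideanSpace ℝ (Fin 3)) :
    EuclideanSpace ℝ (Fin 3) :=
  (-(1 / (4 * π))) • ∫ y, (a y / ‖x - y‖ ^ 3) • (x - y)

/-- Pointwise bound for `Πa` when `a` is a zero-mean Schwartz function: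
`|(Πa)_i(x)| ≤ C (u₁(x) + u₂(x))` for `x ≠ 0`, where
`u₁(x) = |x|^{-1}∫ |y||a(y)|/|x-y|² dy` and `u₂(x) = |x|^{-2}∫ |y||a(y)|/|x-y| dy`. -/
theorem PiOp_pointwise_bound :
    ∃ C : ℝ, 0 < C ∧ ∀ a : 𝓢(EuclideanSpace ℝ (Fin 3), ℝ),
      (∫ x, a x) = 0 →
      ∀ x : EuclideanSpace ℝ (Fin 3), x ≠ 0 → ∀ i : Fin 3,
        |PiOp (⇑a) x i| ≤
          C * (‖x‖⁻¹ * (∫ y, ‖y‖ * |a y| / ‖x - y‖ ^ 2) +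
               (‖x‖ ^ 2)⁻¹ * (∫ y, ‖y‖ * |a y| / ‖x - y‖)) := by
  refine ⟨5, by norm_num, fun a ha x hx i => ?_⟩
  set c : E3 := (‖x‖ ^ 3)⁻¹ • x with hc
  set F : E3 → E3 := fun y => (a y / ‖x - y‖ ^ 3) • (x - y) with hF
  set G : E3 → E3 := fun y => a y • c with hG
  set D : E3 → E3 := fun y => F y - G y with hD
  have hpow : ∀ r : ℝ, 0 ≤ r → (r ^ 3)⁻¹ * r = (r ^ 2)⁻¹ := by
    intro r hr
    rcases eq_or_lt_of_le hr with h | h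
    · simp [← h]
    · field_simp
  have hDsmul : ∀ y, D y = a y • ((‖x - y‖ ^ 3)⁻¹ • (x - y) - (‖x‖ ^ 3)⁻¹ • x) := by
    intro y
    simp only [hD, hF, hG, hc]
    rw [div_eq_mul_inv]
    module
  have hnormD : ∀ y, ‖D y‖ = |a y| * ‖(‖x - y‖ ^ 3)⁻¹ • (x - y) - (‖x‖ ^ 3)⁻¹ • x‖ := by
    intro y
    rw [hDsmul y, norm_smul, Real.norm_eq_abs]
  -- integrability of the two potential integrands
  have hInt2 : Integrable (fun y : E3 => ‖y‖ * |a y| / ‖x - y‖ ^ 2) := by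
    simpa using integrable_schwartz_kernel a x 1 2 (by norm_num)
  have hInt1 : Integrable (fun y : E3 => ‖y‖ * |a y| / ‖x - y‖) := by
    simpa using integrable_schwartz_kernel a x 1 1 (by norm_num)
  have hIntabs2 : Integrable (fun y : E3 => |a y| / ‖x - y‖ ^ 2) := by
    simpa using integrable_schwartz_kernel a x 0 2 (by norm_num)
  -- D is integrable
  have hDmeas : AEStronglyMeasurable D volume := by
    have ha' : Measurable fun y : E3 => a y := a.continuous.measurable
    refine Measurable.aestronglyMeasurable ?_
    rw [hD, hF, hG]
    fun_prop
  have hIntD : Integrable D := by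
    refine Integrable.mono' ((hIntabs2.add ((a.integrable.abs).mul_const (‖x‖ ^ 2)⁻¹)))
      hDmeas (Filter.Eventually.of_forall fun y => ?_)
    rw [hnormD y]
    have hb : ‖(‖x - y‖ ^ 3)⁻¹ • (x - y) - (‖x‖ ^ 3)⁻¹ • x‖ ≤ (‖x - y‖ ^ 2)⁻¹ + (‖x‖ ^ 2)⁻¹ := by
      refine (norm_sub_le _ _).trans ?_
      rw [norm_smul, norm_smul, Real.norm_eq_abs, Real.norm_eq_abs,
        abs_of_nonneg (by positivity), abs_of_nonneg (by positivity),
        hpow _ (norm_nonneg _), hpow _ (norm_nonneg _)]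
    calc |a y| * ‖(‖x - y‖ ^ 3)⁻¹ • (x - y) - (‖x‖ ^ 3)⁻¹ • x‖
        ≤ |a y| * ((‖x - y‖ ^ 2)⁻¹ + (‖x‖ ^ 2)⁻¹) :=
          mul_le_mul_of_nonneg_left hb (abs_nonneg _)
      _ = |a y| / ‖x - y‖ ^ 2 + |a y| * (‖x‖ ^ 2)⁻¹ := by rw [div_eq_mul_inv]; ring
  have hIntG : Integrable G := a.integrable.smul_const c
  have hIntF : Integrable F := by
    have : F = fun y => D y + G y := by
      funext y; rw [hD]; module
    rw [this]; exact hIntD.add hIntG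
  have hG0 : (∫ y, G y) = 0 := by
    rw [hG, integral_smul_const, ha, zero_smul]
  have hFD : (∫ y, F y) = ∫ y, D y := by
    have h1 : (∫ y, F y) = ∫ y, (D y + G y) := by
      congr 1; funext y; rw [hD]; module
    rw [h1, integral_add hIntD hIntG, hG0, add_zero]
  -- the majorant
  set g : E3 → ℝ := fun y =>
    5 * (‖x‖⁻¹ * (‖y‖ * |a y| / ‖x - y‖ ^ 2) + (‖x‖ ^ 2)⁻¹ * (‖y‖ * |a y| / ‖x - y‖)) with hg
  have hIntg : Integrable g := by
    rw [hg]
    exact ((hInt2.const_mul (‖x‖⁻¹)).add (hInt1.const_mul ((‖x‖ ^ 2)⁻¹))).const_mul 5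
  have hae : ∀ᵐ y : E3, ‖D y‖ ≤ g y := by
    have hne : ∀ᵐ y : E3, y ≠ x := by
      have : ({x} : Set E3)ᶜ ∈ MeasureTheory.ae volume :=
        compl_mem_ae_iff.mpr (measure_singleton x)
      filter_upwards [this] with y hy
      simpa using hy
    filter_upwards [hne] with y hy
    rw [hnormD y, hg]
    calc |a y| * ‖(‖x - y‖ ^ 3)⁻¹ • (x - y) - (‖x‖ ^ 3)⁻¹ • x‖
        ≤ |a y| * (5 * (‖y‖ * ((‖x‖ * ‖x - y‖ ^ 2)⁻¹ + (‖x‖ ^ 2 * ‖x - y‖)⁻¹))) :=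
          mul_le_mul_of_nonneg_left (kernel_bound x y hx hy) (abs_nonneg _)
      _ = 5 * (‖x‖⁻¹ * (‖y‖ * |a y| / ‖x - y‖ ^ 2) + (‖x‖ ^ 2)⁻¹ * (‖y‖ * |a y| / ‖x - y‖)) := by
          rw [mul_inv, mul_inv, div_eq_mul_inv, div_eq_mul_inv]
          ring
  have hDg : (∫ y, ‖D y‖) ≤ ∫ y, g y :=
    integral_mono_of_nonneg (Filter.Eventually.of_forall fun y => norm_nonneg _) hIntg hae
  have hgval : (∫ y, g y) = 5 * (‖x‖⁻¹ * (∫ y, ‖y‖ * |a y| / ‖x - y‖ ^ 2) +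
      (‖x‖ ^ 2)⁻¹ * (∫ y, ‖y‖ * |a y| / ‖x - y‖)) := by
    rw [hg, integral_const_mul, integral_add (hInt2.const_mul _) (hInt1.const_mul _),
      integral_const_mul, integral_const_mul]
  -- putting it together
  have hPi : PiOp (⇑a) x i = (-(1 / (4 * π))) * ((∫ y, F y) i) := by
    rw [PiOp, ← hF]
    simp [PiLp.smul_apply, smul_eq_mul]
  rw [hPi, abs_mul, abs_neg, abs_of_pos (by positivity : (0:ℝ) < 1 / (4 * π))]
  have h1 : |(∫ y, F y) i| ≤ ∫ y, ‖D y‖ := by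
    refine (abs_coord_le_norm _ i).trans ?_
    rw [hFD]
    exact norm_integral_le_integral_norm _
  have hS : (0:ℝ) ≤ ‖x‖⁻¹ * (∫ y, ‖y‖ * |a y| / ‖x - y‖ ^ 2) +
      (‖x‖ ^ 2)⁻¹ * (∫ y, ‖y‖ * |a y| / ‖x - y‖) := by
    have i1 : (0:ℝ) ≤ ∫ y, ‖y‖ * |a y| / ‖x - y‖ ^ 2 :=
      integral_nonneg fun y => by positivity
    have i2 : (0:ℝ) ≤ ∫ y, ‖y‖ * |a y| / ‖x - y‖ :=
      integral_nonneg fun y => by positivity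
    positivity
  have hpi1 : 1 / (4 * π) ≤ 1 := by
    rw [div_le_one (by positivity)]
    nlinarith [pi_gt_three]
  calc 1 / (4 * π) * |(∫ y, F y) i| ≤ 1 * (∫ y, ‖D y‖) := by
        refine mul_le_mul hpi1 h1 (abs_nonneg _) zero_le_one
    _ = ∫ y, ‖D y‖ := one_mul _
    _ ≤ ∫ y, g y := hDg
    _ = 5 * _ := hgval
end
end
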